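/- For every r ≥ 0, every t > 0 and every i ∈ {1,…,d}, ∫_{ℝ^d} e^{r|ψ|} |K^i(ψ,t)| dψ ≤ a₁^{(d+1)/2} · e^{−b₀ t} · (t|α|)^{−1/2} · I_d(νt), where ν := |α|² r² / Re α. -/

import Mathlib

open MeasureTheory RealInnerProductSpace

/-- Rotation `e^{tS}x` given by the matrix exponential. -/
noncomputable def ouRot (d : ℕ) (S : Matrix (Fin d) (Fin d) ℝ) (t : ℝ)
    (x : EuclideanSpace ℝ (Fin d)) : EuclideanSpace ℝ (Fin d) :=
  WithLp.toLp 2 (Matrix.mulVec (NormedSpace.exp (t • S)) x)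

/-- The radial kernel `K(ψ,t) = (4παt)^{-d/2} exp(-δt - |ψ|²/(4αt))`. -/
noncomputable def ouK (d : ℕ) (α δ : ℂ) (ψ : EuclideanSpace ℝ (Fin d)) (t : ℝ) : ℂ :=
  (4 * (Real.pi : ℂ) * α * t) ^ (-(d : ℂ) / 2) *
    Complex.exp (-(δ * t) - ((‖ψ‖ ^ 2 : ℝ) : ℂ) / (4 * α * t))

/-- The first-derivative radial kernel `K^i(ψ,t) = -(2tα)⁻¹ ⟨ψ, e^{tS}e_i⟩ K(ψ,t)`. -/
noncomputable def ouKi (d : ℕ) (α δ : ℂ) (S : Matrix (Fin d) (Fin d) ℝ)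
    (i : Fin d) (ψ : EuclideanSpace ℝ (Fin d)) (t : ℝ) : ℂ :=
  -(2 * t * α)⁻¹ * ((⟪ψ, ouRot d S t (EuclideanSpace.single i (1 : ℝ))⟫ : ℝ) : ℂ) *
    ouK d α δ ψ t

/-- `I_m(μ) = (2/Γ(d/2)) ∫_0^∞ s^m e^{-s² + 2√μ s} ds`. -/
noncomputable def ouI (d m : ℕ) (μ : ℝ) : ℝ :=
  (2 / Real.Gamma ((d : ℝ) / 2)) *
    ∫ s in Set.Ioi (0 : ℝ), s ^ m * Real.exp (-s ^ 2 + 2 * Real.sqrt μ * s)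

/-! Since `S` is skew-symmetric, `e^{tS}` is orthogonal, so `|⟨ψ, e^{tS}e_i⟩| ≤ |ψ|`; and
`|K(ψ,t)|` is a real Gaussian `(4π|α|t)^{-d/2} e^{-Re δ t} e^{-c|ψ|²}` with `c = Re α / (4|α|²t)`.
The integrand is therefore bounded by the radial function `C |ψ| e^{r|ψ| - c|ψ|²}`. Polar
coordinates turn its integral into `(2π^{d/2}/Γ(d/2)) ∫_0^∞ ρ^d e^{rρ - cρ²} dρ`, and the
substitution `s = √c ρ` gives `I_d(νt)` because `r/√c = 2√(νt)`. -/

open scoped Matrix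
open Real Set

theorem Matrix.exp_mem_orthogonalGroup_of_transpose_eq_neg {ι : Type*} [Fintype ι] [DecidableEq ι]
    {A : Matrix ι ι ℝ} (hA : Aᵀ = -A) : NormedSpace.exp A ∈ orthogonalGroup ι ℝ := by
  rw [mem_orthogonalGroup_iff, ← exp_transpose, hA,
    ← exp_add_of_commute _ _ (Commute.refl A).neg_right, add_neg_cancel, NormedSpace.exp_zero]

theorem Matrix.norm_toLp_mulVec_of_mem_orthogonalGroup {ι : Type*} [Fintype ι] [DecidableEq ι]
    {M : Matrix ι ι ℝ} (hM : M ∈ orthogonalGroup ι ℝ) (x : EuclideanSpace ℝ ι) :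
    ‖WithLp.toLp 2 (M *ᵥ x.ofLp)‖ = ‖x‖ := by
  rw [← sq_eq_sq₀ (norm_nonneg _) (norm_nonneg _), ← real_inner_self_eq_norm_sq,
    ← real_inner_self_eq_norm_sq, EuclideanSpace.inner_eq_star_dotProduct,
    EuclideanSpace.inner_eq_star_dotProduct]
  simp only [star_trivial]
  rw [dotProduct_mulVec, ← mulVec_transpose, mulVec_mulVec, (mem_orthogonalGroup_iff' _ _).1 hM,
    one_mulVec]

theorem norm_ouRot {d : ℕ} {S : Matrix (Fin d) (Fin d) ℝ} (hS : Sᵀ = -S) (t : ℝ)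
    (x : EuclideanSpace ℝ (Fin d)) : ‖ouRot d S t x‖ = ‖x‖ :=
  Matrix.norm_toLp_mulVec_of_mem_orthogonalGroup
    (Matrix.exp_mem_orthogonalGroup_of_transpose_eq_neg
      (by rw [Matrix.transpose_smul, hS, smul_neg])) x

theorem norm_ouK (d : ℕ) {α : ℂ} (δ : ℂ) (hα : α ≠ 0) (ψ : EuclideanSpace ℝ (Fin d)) {t : ℝ}
    (ht : 0 < t) :
    ‖ouK d α δ ψ t‖ = (4 * π * ‖α‖ * t) ^ (-(d : ℝ) / 2) *
      exp (-δ.re * t - α.re / (4 * ‖α‖ ^ 2 * t) * ‖ψ‖ ^ 2) := by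
  have hexp : -(d : ℂ) / 2 = ((-(d : ℝ) / 2 : ℝ) : ℂ) := by push_cast; ring
  have hre : (((‖ψ‖ ^ 2 : ℝ) : ℂ) / (4 * α * t)).re = α.re / (4 * ‖α‖ ^ 2 * t) * ‖ψ‖ ^ 2 := by
    rw [Complex.div_re, Complex.normSq_eq_norm_sq]
    simp only [Complex.ofReal_re, Complex.ofReal_im, zero_mul, add_zero, norm_mul, Complex.mul_re,
      Complex.mul_im, Complex.re_ofNat, Complex.im_ofNat, Complex.norm_ofNat, Complex.norm_real,
      Real.norm_of_nonneg ht.le]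
    field_simp
    ring
  rw [ouK, norm_mul, hexp, Complex.norm_cpow_real, Complex.norm_exp, Complex.sub_re, hre]
  simp [Real.norm_of_nonneg ht.le, abs_of_pos pi_pos]

theorem norm_ouKi_le {d : ℕ} (α δ : ℂ) {S : Matrix (Fin d) (Fin d) ℝ} (hS : Sᵀ = -S) (i : Fin d)
    (ψ : EuclideanSpace ℝ (Fin d)) {t : ℝ} (ht : 0 ≤ t) :
    ‖ouKi d α δ S i ψ t‖ ≤ (2 * t * ‖α‖)⁻¹ * ‖ψ‖ * ‖ouK d α δ ψ t‖ := by
  have hinner : |⟪ψ, ouRot d S t (EuclideanSpace.single i 1)⟫| ≤ ‖ψ‖ := by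
    simpa [norm_ouRot hS] using abs_real_inner_le_norm ψ (ouRot d S t (EuclideanSpace.single i 1))
  rw [ouKi, norm_mul, norm_mul, norm_neg, norm_inv, Complex.norm_real, Real.norm_eq_abs]
  simp only [norm_mul, Complex.norm_ofNat, Complex.norm_real, Real.norm_of_nonneg ht]
  gcongr

theorem exp_mul_norm_ouKi_le {d : ℕ} {α : ℂ} (δ : ℂ) (hα : α ≠ 0) {S : Matrix (Fin d) (Fin d) ℝ}
    (hS : Sᵀ = -S) (i : Fin d) (ψ : EuclideanSpace ℝ (Fin d)) (r : ℝ) {t : ℝ} (ht : 0 < t) :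
    exp (r * ‖ψ‖) * ‖ouKi d α δ S i ψ t‖ ≤
      (2 * t * ‖α‖)⁻¹ * (4 * π * ‖α‖ * t) ^ (-(d : ℝ) / 2) * exp (-δ.re * t) *
        (‖ψ‖ ^ 1 * exp (r * ‖ψ‖ - α.re / (4 * ‖α‖ ^ 2 * t) * ‖ψ‖ ^ 2)) :=
  calc _ ≤ exp (r * ‖ψ‖) * ((2 * t * ‖α‖)⁻¹ * ‖ψ‖ * ‖ouK d α δ ψ t‖) := by
        gcongr; exact norm_ouKi_le α δ hS i ψ ht.le
    _ = _ := by
        rw [norm_ouK d δ hα ψ ht, exp_sub, exp_sub]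
        field_simp

theorem integrableOn_pow_mul_exp_mul_sub_mul_sq (n : ℕ) (r : ℝ) {c : ℝ} (hc : 0 < c) :
    IntegrableOn (fun ρ : ℝ ↦ ρ ^ n * exp (r * ρ - c * ρ ^ 2)) (Ioi 0) := by
  refine Integrable.mono' ((integrableOn_rpow_mul_exp_neg_mul_sq (half_pos hc)
    (s := n) (by linarith [n.cast_nonneg (α := ℝ)])).const_mul (exp (r ^ 2 / (2 * c))))
    (by fun_prop) ((ae_restrict_iff' measurableSet_Ioi).2 (.of_forall fun ρ (hρ : 0 < ρ) ↦ ?_))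
  have hsq : r * ρ - c * ρ ^ 2 ≤ r ^ 2 / (2 * c) + -(c / 2) * ρ ^ 2 := by
    have : 0 ≤ (c * ρ - r) ^ 2 / (2 * c) := by positivity
    rw [div_add' _ _ _ (by positivity), le_div_iff₀ (by positivity)]
    nlinarith
  rw [Real.norm_of_nonneg (by positivity), rpow_natCast, mul_left_comm, ← exp_add]
  gcongr

theorem integrable_norm_pow_mul_exp_mul_norm_sub_mul_sq {E : Type*} [NormedAddCommGroup E]
    [NormedSpace ℝ E] [Nontrivial E] [FiniteDimensional ℝ E] [MeasurableSpace E] [BorelSpace E]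
    (μ : Measure E) [μ.IsAddHaarMeasure] (n : ℕ) (r : ℝ) {c : ℝ} (hc : 0 < c) :
    Integrable (fun x : E ↦ ‖x‖ ^ n * exp (r * ‖x‖ - c * ‖x‖ ^ 2)) μ := by
  refine (integrable_fun_norm_addHaar μ (f := fun ρ ↦ ρ ^ n * exp (r * ρ - c * ρ ^ 2))).2 ?_
  simpa only [smul_eq_mul, ← mul_assoc, ← pow_add] using
    integrableOn_pow_mul_exp_mul_sub_mul_sq _ r hc

theorem EuclideanSpace.integral_fun_norm {ι : Type*} [Fintype ι] [Nonempty ι] {F : Type*}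
    [NormedAddCommGroup F] [NormedSpace ℝ F] (f : ℝ → F) :
    ∫ x : EuclideanSpace ℝ ι, f ‖x‖ =
      (2 * √π ^ Fintype.card ι / Gamma (Fintype.card ι / 2)) •
        ∫ y in Ioi (0 : ℝ), y ^ (Fintype.card ι - 1) • f y := by
  have hn : (0 : ℝ) < Fintype.card ι := by exact_mod_cast Fintype.card_pos
  rw [integral_fun_norm_addHaar, finrank_euclideanSpace, measureReal_def,
    EuclideanSpace.volume_ball, Gamma_add_one (by positivity), ← Nat.cast_smul_eq_nsmul ℝ,
    smul_smul]
  congr 1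
  rw [ENNReal.toReal_mul, ENNReal.toReal_ofReal (by positivity)]
  simp only [ENNReal.ofReal_one, one_pow, ENNReal.toReal_one, one_mul]
  field_simp

theorem integral_pow_mul_exp_mul_sub_mul_sq (n : ℕ) (r : ℝ) {c : ℝ} (hc : 0 < c) :
    ∫ ρ in Ioi (0 : ℝ), ρ ^ n * exp (r * ρ - c * ρ ^ 2) =
      (√c ^ (n + 1))⁻¹ * ∫ s in Ioi (0 : ℝ), s ^ n * exp (-s ^ 2 + r / √c * s) := by
  have hsc : 0 < √c := sqrt_pos.2 hc
  have hsub := integral_comp_mul_left_Ioi (fun s ↦ s ^ n * exp (-s ^ 2 + r / √c * s)) 0 hsc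
  have hscale : ∀ ρ : ℝ, (√c * ρ) ^ n * exp (-(√c * ρ) ^ 2 + r / √c * (√c * ρ)) =
      √c ^ n * (ρ ^ n * exp (r * ρ - c * ρ ^ 2)) := by
    intro ρ
    have hlin : r / √c * (√c * ρ) = r * ρ := by field_simp
    rw [mul_pow, mul_pow, sq_sqrt hc.le, hlin]
    ring_nf
  simp only [hscale, mul_zero, integral_const_mul, smul_eq_mul] at hsub
  rw [pow_succ, mul_inv, mul_assoc, ← hsub, ← mul_assoc, inv_mul_cancel₀ (by positivity), one_mul]

theorem ouKi_constant_eq {a β t : ℝ} (ha : 0 < a) (hβ : 0 < β) (ht : 0 < t) (n : ℕ) :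
    √π ^ n * (2 * t * a)⁻¹ * (4 * π * a * t) ^ (-(n : ℝ) / 2) *
        (√(β / (4 * a ^ 2 * t)) ^ (n + 1))⁻¹ =
      (a / β) ^ (((n : ℝ) + 1) / 2) * (t * a) ^ (-(1 : ℝ) / 2) := by
  have hπ := pi_pos
  refine log_injOn_pos (by simp only [mem_Ioi]; positivity) (by simp only [mem_Ioi]; positivity) ?_
  have h4 : log 4 = 2 * log 2 := by
    rw [show (4 : ℝ) = 2 ^ 2 by norm_num, log_pow, Nat.cast_ofNat]
  simp (disch := positivity) only [log_mul, log_inv, log_pow, log_rpow, log_sqrt, log_div, h4]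
  push_cast
  ring

theorem div_sqrt_eq_two_mul_sqrt {a β t r : ℝ} (hβ : 0 < β) (ht : 0 < t) (hr : 0 ≤ r) :
    r / √(β / (4 * a ^ 2 * t)) = 2 * √(a ^ 2 * r ^ 2 / β * t) := by
  rcases eq_or_ne a 0 with rfl | ha
  · simp
  rw [show a ^ 2 * r ^ 2 / β * t = (r / 2) ^ 2 / (β / (4 * a ^ 2 * t)) by field_simp; ring,
    sqrt_div (sq_nonneg _), sqrt_sq (by positivity)]
  ring

theorem ouKi_exp_weighted_integral_bound_general
    (d : ℕ) (α δ : ℂ) (hα : 0 < α.re)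
    (S : Matrix (Fin d) (Fin d) ℝ) (hS : S.transpose = -S)
    (r : ℝ) (hr : 0 ≤ r) (t : ℝ) (ht : 0 < t) (i : Fin d) :
    (∫ ψ : EuclideanSpace ℝ (Fin d), Real.exp (r * ‖ψ‖) * ‖ouKi d α δ S i ψ t‖)
      ≤ (‖α‖ / α.re) ^ (((d : ℝ) + 1) / 2) * Real.exp (-δ.re * t) *
        (t * ‖α‖) ^ (-(1 : ℝ) / 2) *
        ouI d d ((‖α‖ ^ 2 * r ^ 2 / α.re) * t) := by
  have : Nonempty (Fin d) := ⟨i⟩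
  have hα0 : α ≠ 0 := fun h ↦ by simp [h] at hα
  have ha : 0 < ‖α‖ := norm_pos_iff.2 hα0
  set c := α.re / (4 * ‖α‖ ^ 2 * t)
  have hc : 0 < c := by positivity
  set C := (2 * t * ‖α‖)⁻¹ * (4 * π * ‖α‖ * t) ^ (-(d : ℝ) / 2) * exp (-δ.re * t)
  calc _ ≤ ∫ ψ : EuclideanSpace ℝ (Fin d), C * (‖ψ‖ ^ 1 * exp (r * ‖ψ‖ - c * ‖ψ‖ ^ 2)) :=
        integral_mono_of_nonneg (.of_forall fun ψ ↦ by positivity)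
          ((integrable_norm_pow_mul_exp_mul_norm_sub_mul_sq volume 1 r hc).const_mul C)
          (.of_forall fun ψ ↦ exp_mul_norm_ouKi_le δ hα0 hS i ψ r ht)
    _ = C * (2 * √π ^ d / Gamma (d / 2) *
          ((√c ^ (d + 1))⁻¹ * ∫ s in Ioi (0 : ℝ), s ^ d * exp (-s ^ 2 + r / √c * s))) := by
        rw [integral_const_mul,
          EuclideanSpace.integral_fun_norm (fun ρ ↦ ρ ^ 1 * exp (r * ρ - c * ρ ^ 2)),
          Fintype.card_fin, ← integral_pow_mul_exp_mul_sub_mul_sq d r hc, smul_eq_mul]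
        simp only [smul_eq_mul, ← mul_assoc, ← pow_add, Nat.sub_add_cancel i.pos]
    _ = _ := by
        rw [ouI, ← div_sqrt_eq_two_mul_sqrt hα ht hr]
        linear_combination (exp (-δ.re * t) * (2 / Gamma (d / 2)) *
          ∫ s in Ioi (0 : ℝ), s ^ d * exp (-s ^ 2 + r / √c * s)) *
            ouKi_constant_eq ha hα ht d

/-- exponentially weighted integral bound for the kernel `K^i`. -/
theorem ouKi_exp_weighted_integral_bound
    (d : ℕ) (hd : 1 ≤ d) (α δ : ℂ) (hα : 0 < α.re)
    (S : Matrix (Fin d) (Fin d) ℝ) (hS : S.transpose = -S)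
    (r : ℝ) (hr : 0 ≤ r) (t : ℝ) (ht : 0 < t) (i : Fin d) :
    (∫ ψ : EuclideanSpace ℝ (Fin d), Real.exp (r * ‖ψ‖) * ‖ouKi d α δ S i ψ t‖)
      ≤ (‖α‖ / α.re) ^ (((d : ℝ) + 1) / 2) * Real.exp (-δ.re * t) *
        (t * ‖α‖) ^ (-(1 : ℝ) / 2) *
        ouI d d ((‖α‖ ^ 2 * r ^ 2 / α.re) * t) :=
  ouKi_exp_weighted_integral_bound_general d α δ hα S hS r hr t ht i
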